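/- Let l ≤ m ≤ n be positive integers with l + m + n = 4b + 3 for a nonnegative integer b. Then K_{l,m,n} has an equitable (b+1,2)-tree-coloring if and only if (l,m,n) satisfies Condition A. -/

import Mathlib

open SimpleGraph

noncomputable section

/-- `f` is a `(q,2)`-tree-coloring of `G`: the subgraph induced by each color class
is a forest (acyclic) in which every vertex has at most `2` neighbours inside its class. -/
def IsTreeColoring2 {V : Type*} (G : SimpleGraph V) (q : ℕ) (f : V → Fin q) : Prop :=
  (∀ c : Fin q, (G.induce (f ⁻¹' {c})).IsAcyclic) ∧
    ∀ v : V, Set.ncard {w : V | G.Adj v w ∧ f w = f v} ≤ 2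

/-- The coloring `f` is equitable: any two color classes differ in size by at most one. -/
def IsEquitableColoring {V : Type*} (q : ℕ) (f : V → Fin q) : Prop :=
  ∀ c₁ c₂ : Fin q, Set.ncard (f ⁻¹' {c₁}) ≤ Set.ncard (f ⁻¹' {c₂}) + 1

/-- `G` has an equitable `(q,2)`-tree-coloring. -/
def HasEquitableTreeColoring2 {V : Type*} (G : SimpleGraph V) (q : ℕ) : Prop :=
  ∃ f : V → Fin q, IsTreeColoring2 G q f ∧ IsEquitableColoring q f

/-- `G` has a proper equitable `q`-coloring. -/
def HasProperEquitableColoring {V : Type*} (G : SimpleGraph V) (q : ℕ) : Prop :=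
  ∃ f : V → Fin q, (∀ v w : V, G.Adj v w → f v ≠ f w) ∧ IsEquitableColoring q f

/-- The strong equitable vertex 2-arboricity `va≡₂(G)`: the minimum `p` such that `G`
has an equitable `(q,2)`-tree-coloring for every `q ≥ p`. -/
def va2 {V : Type*} (G : SimpleGraph V) : ℕ :=
  sInf {p : ℕ | ∀ q : ℕ, p ≤ q → HasEquitableTreeColoring2 G q}

/-- The parameter `d` from the definition of `p(q : n₁, …, n_k)`: the minimum value
greater than `⌊(n₁+⋯+n_k)/q⌋` such that (i) some two distinct `nᵢ, nⱼ` are not divisible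
by `d`, or (ii) some `nⱼ` has `nⱼ/⌊nⱼ/d⌋ > d+1`. -/
def dVal {ι : Type*} [Fintype ι] (q : ℕ) (ns : ι → ℕ) : ℕ :=
  sInf {d : ℕ |
    (∑ i, ns i) / q < d ∧
      ((∃ i j : ι, i ≠ j ∧ ¬ d ∣ ns i ∧ ¬ d ∣ ns j) ∨
        ∃ j : ι, ((d : ℚ) + 1) < (ns j : ℚ) / ((ns j / d : ℕ) : ℚ))}

/-- `p(q : n₁, …, n_k) = ⌈n₁/d⌉ + ⋯ + ⌈n_k/d⌉` where `d = dVal q ns`. -/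
def pVal {ι : Type*} [Fintype ι] (q : ℕ) (ns : ι → ℕ) : ℕ :=
  ∑ i, ⌈(ns i : ℚ) / (dVal q ns : ℚ)⌉₊

/-- The part of a vertex of the complete tripartite graph. -/
def triPart {l m n : ℕ} : Fin l ⊕ Fin m ⊕ Fin n → Fin 3
  | Sum.inl _ => 0
  | Sum.inr (Sum.inl _) => 1
  | Sum.inr (Sum.inr _) => 2

/-- The complete tripartite graph `K_{l,m,n}`. -/
def completeTripartiteGraph (l m n : ℕ) : SimpleGraph (Fin l ⊕ Fin m ⊕ Fin n) where
  Adj v w := triPart v ≠ triPart w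
  symm := ⟨fun _ _ h => Ne.symm h⟩
  loopless := ⟨fun _ h => h rfl⟩

/-- Condition A for a triple `(l,m,n)`. -/
def ConditionA (l m n : ℕ) : Prop :=
  ∃ j h k : ℕ, 0 < j ∧ 0 < h ∧ 0 < k ∧
    ((l, m, n) = (4 * j, 4 * h, 4 * k - 1) ∨
     (l, m, n) = (4 * j, 4 * h - 1, 4 * k) ∨
     (l, m, n) = (4 * j - 1, 4 * h, 4 * k) ∨
     (l, m, n) = (4 * j, 4 * h - 2, 4 * k - 3) ∨
     (l, m, n) = (4 * j, 4 * h - 3, 4 * k - 2) ∨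
     (l, m, n) = (4 * j - 2, 4 * h, 4 * k - 3) ∨
     (l, m, n) = (4 * j - 2, 4 * h - 3, 4 * k) ∨
     (l, m, n) = (4 * j - 3, 4 * h, 4 * k - 2) ∨
     (l, m, n) = (4 * j - 3, 4 * h - 2, 4 * k))

/-- Condition B for a triple `(l,m,n)`. -/
def ConditionB (l m n : ℕ) : Prop :=
  ∃ j h k : ℕ, 0 < j ∧ 0 < h ∧ 0 < k ∧
    ((l, m, n) = (4 * (j + 2) + 3, 4 * h, 4 * k) ∨
     (l, m, n) = (4 * j, 4 * (h + 2) + 3, 4 * k) ∨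
     (l, m, n) = (4 * j, 4 * h, 4 * (k + 2) + 3) ∨
     (l, m, n) = (4 * (j + 1) + 2, 4 * h + 1, 4 * k) ∨
     (l, m, n) = (4 * (j + 1) + 2, 4 * h, 4 * k + 1) ∨
     (l, m, n) = (4 * j + 1, 4 * (h + 1) + 2, 4 * k) ∨
     (l, m, n) = (4 * j + 1, 4 * h, 4 * (k + 1) + 2) ∨
     (l, m, n) = (4 * j, 4 * (h + 1) + 2, 4 * k + 1) ∨
     (l, m, n) = (4 * j, 4 * h + 1, 4 * (k + 1) + 2) ∨
     (l, m, n) = (4 * j + 1, 4 * h + 1, 4 * k + 1))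

/-!
In a `(q,2)`-tree-colouring of `K_{l,m,n}` a colour class meets at most two parts (three
vertices from different parts form a triangle). A vertex is adjacent to every member of its class
outside its own part, so all but two members of the class lie in its part; hence a class of size
at least four meeting two parts would contain two vertices on each side, i.e. a `4`-cycle. With
`4b + 3` vertices and `b + 1` equitable classes there are `b` classes of size `4` and one of size
`3`. The classes of size `4` lie inside single parts, so `l, m, n` are congruent mod `4` to the
part counts of the class of size `3`, which sum to `3` with one of them zero: this is
Condition A. Conversely, cutting every part into blocks of four and collecting the (at most
three, in at most two parts) leftover vertices in one more class gives such a colouring.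
-/

open Finset

namespace SimpleGraph

variable {V : Type*} {G : SimpleGraph V}

theorem IsAcyclic.subsingleton_commonNeighbors (hG : G.IsAcyclic) {a c : V} (hac : a ≠ c) :
    (G.commonNeighbors a c).Subsingleton := by
  intro b hb d hd
  rw [mem_commonNeighbors] at hb hd
  let p : G.Path a c := ⟨.cons hb.1 (.cons hb.2.symm .nil), by simp [hac, hb.1.ne, hb.2.ne']⟩
  let q : G.Path a c := ⟨.cons hd.1 (.cons hd.2.symm .nil), by simp [hac, hd.1.ne, hd.2.ne']⟩
  simpa [p, q] using congrArg (fun r : G.Path a c => r.1.getVert 1)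
    (Subsingleton.elim (h := hG.subsingleton_path a c) p q)

theorem IsAcyclic.of_card_le_three (hV : ENat.card V ≤ 3) (hG : G.CliqueFree 3) :
    G.IsAcyclic := by
  classical
  intro v p hp
  have hlen : p.length = 3 := by
    have : p.support.tail.length ≤ 3 := by
      exact_mod_cast hp.support_nodup.length_le_enatCard.trans hV
    rw [List.length_tail, p.length_support] at this
    have := hp.three_le_length
    omega
  match p, hlen with
  | .cons h₁ (.cons h₂ (.cons h₃ .nil)), _ =>
    exact hG _ (is3Clique_triple_iff.mpr ⟨h₁, h₃.symm, h₂⟩)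

end SimpleGraph

theorem Set.ncard_preimage_singleton_eq_card {V κ : Type*} [Fintype V] [DecidableEq κ]
    (f : V → κ) (c : κ) : (f ⁻¹' {c}).ncard = #{v | f v = c} := by
  rw [← Set.ncard_coe_finset]
  congr 1
  ext
  simp

theorem Finset.exists_add_one_eq_of_sum_add_one_eq {ι : Type*} [Fintype ι] {a : ι → ℕ} {s : ℕ}
    (ha : ∀ i j, a i ≤ a j + 1) (hsum : ∑ i, a i + 1 = Fintype.card ι * s) :
    ∃ i₀, a i₀ + 1 = s ∧ ∀ i ≠ i₀, a i = s := by
  classical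
  obtain ⟨i₀, hi₀⟩ : ∃ i₀, a i₀ < s := by
    by_contra! h
    have := card_nsmul_le_sum univ (fun i => a i) s fun i _ => h i
    rw [card_univ, smul_eq_mul] at this
    omega
  have hle : ∀ i, a i ≤ s := fun i => by have := ha i i₀; omega
  have hcard : ∑ _i ∈ univ.erase i₀, s + s = Fintype.card ι * s := by
    rw [sum_const, card_erase_of_mem (mem_univ _), card_univ, smul_eq_mul, ← Nat.succ_mul,
      Nat.succ_eq_add_one, Nat.sub_add_cancel (Fintype.card_pos_iff.2 ⟨i₀⟩)]
  have hrest : ∑ i ∈ univ.erase i₀, a i ≤ ∑ _i ∈ univ.erase i₀, s := sum_le_sum fun i _ => hle i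
  rw [← add_sum_erase _ _ (mem_univ i₀)] at hsum
  refine ⟨i₀, by omega, fun i hi => ?_⟩
  exact (sum_eq_sum_iff_of_le fun i _ => hle i).1 (by omega) i (mem_erase.2 ⟨hi, mem_univ _⟩)

theorem IsEquitableColoring.exists_ncard_eq {V : Type*} [Fintype V] {q s : ℕ} {f : V → Fin q}
    (hf : IsEquitableColoring q f) (hV : Fintype.card V + 1 = q * s) :
    ∃ c₀, (f ⁻¹' {c₀}).ncard + 1 = s ∧ ∀ c ≠ c₀, (f ⁻¹' {c}).ncard = s := by
  classical
  refine exists_add_one_eq_of_sum_add_one_eq hf ?_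
  rw [Fintype.card_fin, ← hV, ← card_univ,
    card_eq_sum_card_fiberwise (f := f) (t := univ) fun _ _ => mem_univ _]
  simp [Set.ncard_preimage_singleton_eq_card]

theorem Finset.card_modEq_card_filter_of_dvd {V κ : Type*} [Fintype κ] [DecidableEq κ]
    (s : Finset V) (f : V → κ) (c₀ : κ) {d : ℕ} (h : ∀ c ≠ c₀, d ∣ #{v ∈ s | f v = c}) :
    #s ≡ #{v ∈ s | f v = c₀} [MOD d] := by
  rw [card_eq_sum_card_fiberwise (f := f) (t := univ) fun _ _ => mem_univ _,
    ← add_sum_erase _ _ (mem_univ c₀)]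
  simpa using (Nat.modEq_zero_iff_dvd.2 <| dvd_sum fun c hc => h c (ne_of_mem_erase hc)).add_left
    #{v ∈ s | f v = c₀}

theorem card_filter_and_eq_zero_or {V ι κ : Type*} [Fintype V] [DecidableEq ι] [DecidableEq κ]
    {π : V → ι} {f : V → κ} {c : κ} (hpart : ∀ v w, f v = c → f w = c → π v = π w) (i : ι) :
    #{v | π v = i ∧ f v = c} = 0 ∨ #{v | π v = i ∧ f v = c} = #{v | f v = c} := by
  by_cases h : ∃ v, f v = c ∧ π v = i
  · obtain ⟨v, hv, hvi⟩ := h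
    refine .inr (congrArg card (filter_congr fun w _ => ?_))
    exact ⟨And.right, fun hw => ⟨(hpart w v hw hv).trans hvi, hw⟩⟩
  · push Not at h
    exact .inl (card_eq_zero.2 (filter_eq_empty_iff.2 fun v _ hv => h v hv.2 hv.1))

section Multipartite

variable {V ι : Type*} {G : SimpleGraph V} {π : V → ι}

theorem ncard_adj_add_ncard_samePart (hG : ∀ v w, G.Adj v w ↔ π v ≠ π w) [Finite V]
    {κ : Type*} (f : V → κ) (v : V) :
    {w | G.Adj v w ∧ f w = f v}.ncard + {w | π w = π v ∧ f w = f v}.ncard =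
      (f ⁻¹' {f v}).ncard := by
  rw [← Set.ncard_union_eq]
  · congr 1
    ext w
    simp only [hG, Set.mem_union, Set.mem_ofPred_eq, Set.mem_preimage, Set.mem_singleton_iff]
    tauto
  · rw [Set.disjoint_left]
    rintro w ⟨hvw, -⟩ ⟨hwv, -⟩
    exact (hG v w).1 hvw hwv.symm

theorem IsTreeColoring2.samePart_of_four_le_ncard (hG : ∀ v w, G.Adj v w ↔ π v ≠ π w)
    [Finite V] {q : ℕ} {f : V → Fin q} (hf : IsTreeColoring2 G q f) {c : Fin q}
    (hc : 4 ≤ (f ⁻¹' {c}).ncard) : ∀ v w, f v = c → f w = c → π v = π w := by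
  intro v w hv hw
  by_contra hvw
  have two_le : ∀ u, f u = c → 1 < {x | π x = π u ∧ f x = f u}.ncard := fun u hu => by
    have := ncard_adj_add_ncard_samePart hG f u
    have := hf.2 u
    subst hu
    omega
  obtain ⟨a, a', ⟨hav, hac⟩, ⟨ha'v, ha'c⟩, haa'⟩ := (Set.one_lt_ncard_iff).1 (two_le v hv)
  obtain ⟨b, b', ⟨hbw, hbc⟩, ⟨hb'w, hb'c⟩, hbb'⟩ := (Set.one_lt_ncard_iff).1 (two_le w hw)
  have hadj : ∀ x y, π x = π v → π y = π w → G.Adj x y := fun x y hx hy =>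
    (hG x y).2 (hx ▸ hy ▸ hvw)
  refine hbb' (congrArg Subtype.val <| (hf.1 c).subsingleton_commonNeighbors
    (a := ⟨a, by simp_all⟩) (c := ⟨a', by simp_all⟩) (fun h => haa' (congrArg Subtype.val h))
    (x := ⟨b, by simp_all⟩) ?_ (y := ⟨b', by simp_all⟩) ?_)
  · exact ⟨hadj a b hav hbw, hadj a' b ha'v hbw⟩
  · exact ⟨hadj a b' hav hb'w, hadj a' b' ha'v hb'w⟩

end Multipartite

section Tripartite

variable {V : Type*} {G : SimpleGraph V} {π : V → Fin 3}

theorem cliqueFree_three_induce_iff (hG : ∀ v w, G.Adj v w ↔ π v ≠ π w) (S : Set V) :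
    (G.induce S).CliqueFree 3 ↔ ∃ p, ∀ v ∈ S, π v ≠ p := by
  classical
  constructor
  · intro hS
    by_contra! hall
    choose x hxS hx using hall
    refine hS {⟨x 0, hxS 0⟩, ⟨x 1, hxS 1⟩, ⟨x 2, hxS 2⟩} (is3Clique_triple_iff.mpr ?_)
    simp only [comap_adj, Function.Embedding.subtype_apply, hG, hx]
    decide
  · rintro ⟨p, hp⟩ t ht
    obtain ⟨a, b, c, hab, hac, hbc, rfl⟩ := is3Clique_iff.mp ht
    simp only [comap_adj, Function.Embedding.subtype_apply, hG] at hab hac hbc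
    have : ∀ x y z p : Fin 3, x ≠ y → x ≠ z → y ≠ z → p = x ∨ p = y ∨ p = z := by decide
    rcases this _ _ _ p hab hac hbc with h | h | h
    exacts [hp a a.2 h.symm, hp b b.2 h.symm, hp c c.2 h.symm]

theorem isTreeColoring2_of_forall_class [Finite V] (hG : ∀ v w, G.Adj v w ↔ π v ≠ π w) {q : ℕ}
    {f : V → Fin q}
    (hf : ∀ c, (∀ v w, f v = c → f w = c → π v = π w) ∨
      ((f ⁻¹' {c}).ncard ≤ 3 ∧ ∃ p, ∀ v, f v = c → π v ≠ p)) :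
    IsTreeColoring2 G q f := by
  refine ⟨fun c => ?_, fun v => ?_⟩
  · rcases hf c with hpart | ⟨hc, hmiss⟩
    · convert isAcyclic_bot
      ext ⟨v, hv⟩ ⟨w, hw⟩
      simpa [hG] using hpart v w hv hw
    · refine .of_card_le_three ?_ ((cliqueFree_three_induce_iff hG _).2 hmiss)
      rw [ENat.card_coe_set_eq, ← (Set.toFinite _).cast_ncard_eq]
      exact_mod_cast hc
  · rcases hf (f v) with hpart | ⟨hc, -⟩
    · have : {w | G.Adj v w ∧ f w = f v} = ∅ :=
        Set.eq_empty_of_forall_notMem fun w ⟨hvw, hw⟩ => (hG v w).1 hvw (hpart v w rfl hw)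
      simp [this]
    · have := ncard_adj_add_ncard_samePart hG f v
      have : 0 < {w | π w = π v ∧ f w = f v}.ncard := (Set.ncard_pos).2 ⟨v, rfl, rfl⟩
      omega

end Tripartite

def blockColor (B off s i : ℕ) : ℕ :=
  if i < 4 * (s / 4) then off + i / 4 else B

theorem card_filter_blockColor {B off s : ℕ} (h : off + s / 4 ≤ B) (c : ℕ) :
    #{i : Fin s | blockColor B off s i = c} =
      if c = B then s % 4 else if off ≤ c ∧ c < off + s / 4 then 4 else 0 := by
  rw [card_filter, Fin.sum_univ_eq_sum_range (fun i => if blockColor B off s i = c then 1 else 0),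
    ← card_filter]
  split_ifs with hB hc
  · rw [show {i ∈ range s | blockColor B off s i = c} = Ico (4 * (s / 4)) s by
      ext i; rw [mem_filter, mem_range, mem_Ico]; unfold blockColor; split_ifs <;> omega]
    simp only [Nat.card_Ico]
    omega
  · rw [show {i ∈ range s | blockColor B off s i = c} = Ico (4 * (c - off)) (4 * (c - off) + 4) by
      ext i; rw [mem_filter, mem_range, mem_Ico]; unfold blockColor; split_ifs <;> omega]
    simp
  · rw [card_eq_zero, filter_eq_empty_iff]
    intro i hi
    simp only [mem_range] at hi
    simp only [blockColor]
    split_ifs <;> omega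

section CompleteTripartite

variable {l m n : ℕ}

theorem completeTripartiteGraph_adj_iff (v w : Fin l ⊕ Fin m ⊕ Fin n) :
    (completeTripartiteGraph l m n).Adj v w ↔ triPart v ≠ triPart w :=
  Iff.rfl

theorem card_filter_triPart (p : Fin 3) :
    #{v : Fin l ⊕ Fin m ⊕ Fin n | triPart v = p} = ![l, m, n] p := by
  rw [card_filter, Fintype.sum_sum_type, Fintype.sum_sum_type]
  fin_cases p <;> simp [triPart]

theorem mod_four_of_hasEquitableTreeColoring2 {b : ℕ} (hsum : l + m + n = 4 * b + 3)
    (h : HasEquitableTreeColoring2 (completeTripartiteGraph l m n) (b + 1)) :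
    l % 4 + m % 4 + n % 4 = 3 ∧ (l % 4 = 0 ∨ m % 4 = 0 ∨ n % 4 = 0) := by
  classical
  obtain ⟨f, hf, heq⟩ := h
  obtain ⟨c₀, hc₀, hc⟩ := heq.exists_ncard_eq (s := 4) (by simp; omega)
  rw [Set.ncard_preimage_singleton_eq_card] at hc₀
  have hsum_parts : ∑ p, #{v | triPart v = p ∧ f v = c₀} = #{v | f v = c₀} := by
    rw [card_eq_sum_card_fiberwise (f := triPart) (t := univ) fun _ _ => mem_univ _]
    simp only [filter_filter, and_comm]
  have hmod_parts : ∀ p, ![l, m, n] p % 4 = #{v | triPart v = p ∧ f v = c₀} := by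
    intro p
    have hdvd : ∀ c ≠ c₀, 4 ∣ #{v ∈ {v | triPart v = p} | f v = c} := fun c hc' => by
      rw [filter_filter]
      have hc4 := hc c hc'
      rw [Set.ncard_preimage_singleton_eq_card] at hc4
      rcases card_filter_and_eq_zero_or
        (hf.samePart_of_four_le_ncard completeTripartiteGraph_adj_iff (hc c hc').ge) p with h | h
      · simp [h]
      · simp [h, hc4]
    have hle : #{v | triPart v = p ∧ f v = c₀} ≤ #{v | f v = c₀} :=
      card_le_card (monotone_filter_right _ fun _ _ h => h.2)
    have := card_modEq_card_filter_of_dvd _ f c₀ hdvd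
    rw [filter_filter, card_filter_triPart] at this
    rw [this, Nat.mod_eq_of_lt (by omega)]
  obtain ⟨p, hp⟩ := (cliqueFree_three_induce_iff completeTripartiteGraph_adj_iff _).1
    ((hf.1 c₀).cliqueFree le_rfl)
  have hxp : #{v | triPart v = p ∧ f v = c₀} = 0 :=
    card_eq_zero.2 (filter_eq_empty_iff.2 fun v _ hv => hp v hv.2 hv.1)
  have h0 : l % 4 = _ := hmod_parts 0
  have h1 : m % 4 = _ := hmod_parts 1
  have h2 : n % 4 = _ := hmod_parts 2
  rw [Fin.sum_univ_three] at hsum_parts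
  rcases (by decide : ∀ p : Fin 3, p = 0 ∨ p = 1 ∨ p = 2) p with rfl | rfl | rfl <;> omega

def tripartiteBlockColor (l m n : ℕ) : Fin l ⊕ Fin m ⊕ Fin n → ℕ
  | .inl i => blockColor (l / 4 + m / 4 + n / 4) 0 l i
  | .inr (.inl i) => blockColor (l / 4 + m / 4 + n / 4) (l / 4) m i
  | .inr (.inr i) => blockColor (l / 4 + m / 4 + n / 4) (l / 4 + m / 4) n i

theorem tripartiteBlockColor_le (v : Fin l ⊕ Fin m ⊕ Fin n) :
    tripartiteBlockColor l m n v ≤ l / 4 + m / 4 + n / 4 := by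
  rcases v with i | i | i <;> simp only [tripartiteBlockColor, blockColor] <;> split_ifs <;> omega

def tripartiteBlockColoring (l m n : ℕ) (v : Fin l ⊕ Fin m ⊕ Fin n) :
    Fin (l / 4 + m / 4 + n / 4 + 1) :=
  ⟨tripartiteBlockColor l m n v, Nat.lt_succ_of_le (tripartiteBlockColor_le v)⟩

theorem triPart_eq_of_tripartiteBlockColor_eq {v w : Fin l ⊕ Fin m ⊕ Fin n}
    (h : tripartiteBlockColor l m n v = tripartiteBlockColor l m n w)
    (hlt : tripartiteBlockColor l m n v < l / 4 + m / 4 + n / 4) : triPart v = triPart w := by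
  rcases v with i | i | i <;> rcases w with j | j | j <;>
    simp only [tripartiteBlockColor, blockColor] at h hlt <;> first
      | rfl
      | (split_ifs at h hlt <;> omega)

theorem mod_four_ne_zero_of_tripartiteBlockColor_eq {v : Fin l ⊕ Fin m ⊕ Fin n}
    (h : tripartiteBlockColor l m n v = l / 4 + m / 4 + n / 4) :
    ![l, m, n] (triPart v) % 4 ≠ 0 := by
  rcases v with i | i | i <;> simp only [tripartiteBlockColor, blockColor] at h <;>
    split_ifs at h <;> simp [triPart] <;> omega

theorem card_filter_tripartiteBlockColor {c : ℕ} (hc : c ≤ l / 4 + m / 4 + n / 4) :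
    #{v | tripartiteBlockColor l m n v = c} =
      if c = l / 4 + m / 4 + n / 4 then l % 4 + m % 4 + n % 4 else 4 := by
  rw [card_filter, Fintype.sum_sum_type, Fintype.sum_sum_type, ← card_filter, ← card_filter,
    ← card_filter]
  show #{i : Fin l | blockColor _ 0 l i = c} + (#{i : Fin m | blockColor _ (l / 4) m i = c} +
    #{i : Fin n | blockColor _ (l / 4 + m / 4) n i = c}) = _
  rw [card_filter_blockColor (by omega),
    card_filter_blockColor (by omega), card_filter_blockColor (by omega)]
  split_ifs <;> omega

theorem hasEquitableTreeColoring2_of_mod_four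
    (h : l % 4 + m % 4 + n % 4 = 3 ∧ (l % 4 = 0 ∨ m % 4 = 0 ∨ n % 4 = 0)) :
    HasEquitableTreeColoring2 (completeTripartiteGraph l m n) (l / 4 + m / 4 + n / 4 + 1) := by
  classical
  set f := tripartiteBlockColoring l m n
  have hcard : ∀ c, (f ⁻¹' {c}).ncard = if (c : ℕ) = l / 4 + m / 4 + n / 4 then 3 else 4 := by
    intro c
    rw [Set.ncard_preimage_singleton_eq_card, ← h.1,
      ← card_filter_tripartiteBlockColor (Nat.lt_succ_iff.1 c.2)]
    simp [f, tripartiteBlockColoring, Fin.ext_iff]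
  refine ⟨f, isTreeColoring2_of_forall_class completeTripartiteGraph_adj_iff fun c => ?_,
    fun c₁ c₂ => ?_⟩
  · rcases (Nat.lt_succ_iff.1 c.2).lt_or_eq with hc | hc
    · refine .inl fun v w hv hw => triPart_eq_of_tripartiteBlockColor_eq ?_ ?_
      · exact Fin.ext_iff.1 (hv.trans hw.symm)
      · exact (Fin.ext_iff.1 hv).trans_lt hc
    · obtain ⟨p, hp⟩ : ∃ p : Fin 3, ![l, m, n] p % 4 = 0 := by
        rcases h.2 with h0 | h0 | h0
        exacts [⟨0, h0⟩, ⟨1, h0⟩, ⟨2, h0⟩]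
      refine .inr ⟨by rw [hcard, if_pos hc], p, fun v hv hvp => ?_⟩
      exact mod_four_ne_zero_of_tripartiteBlockColor_eq ((Fin.ext_iff.1 hv).trans hc) (hvp ▸ hp)
  · rw [hcard, hcard]
    split_ifs <;> omega

theorem conditionA_iff :
    ConditionA l m n ↔
      0 < l ∧ 0 < m ∧ 0 < n ∧ l % 4 + m % 4 + n % 4 = 3 ∧ (l % 4 = 0 ∨ m % 4 = 0 ∨ n % 4 = 0) := by
  constructor
  · rintro ⟨j, h, k, hj, hh, hk, hc⟩
    simp only [Prod.mk.injEq] at hc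
    omega
  · rintro ⟨hl, hm, hn, hres⟩
    refine ⟨(l + 3) / 4, (m + 3) / 4, (n + 3) / 4, by omega, by omega, by omega, ?_⟩
    simp only [Prod.mk.injEq]
    have : l % 4 < 4 := Nat.mod_lt _ (by norm_num)
    have : m % 4 < 4 := Nat.mod_lt _ (by norm_num)
    interval_cases hl4 : l % 4 <;> interval_cases hm4 : m % 4 <;>
    · repeat (first | (refine Or.inl ⟨?_, ?_, ?_⟩ <;> omega) | refine Or.inr ?_)
      all_goals refine ⟨?_, ?_, ?_⟩ <;> omega

end CompleteTripartite

theorem statement16 (l m n b : ℕ) (hl : 0 < l) (hlm : l ≤ m) (hmn : m ≤ n)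
    (hsum : l + m + n = 4 * b + 3) :
    HasEquitableTreeColoring2 (completeTripartiteGraph l m n) (b + 1) ↔
      ConditionA l m n := by
  have hm : 0 < m := hl.trans_le hlm
  have hn : 0 < n := hm.trans_le hmn
  rw [conditionA_iff]
  constructor
  · exact fun h => ⟨hl, hm, hn, mod_four_of_hasEquitableTreeColoring2 hsum h⟩
  · rintro ⟨-, -, -, hres⟩
    obtain rfl : b = l / 4 + m / 4 + n / 4 := by omega
    exact hasEquitableTreeColoring2_of_mod_four hres
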